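/- arXiv:2405.07914 — 4 statements merged into one kernel-verified Lean document; each statement's English description precedes it below -/
import Mathlib

section
/- Let G be a chordal graph with a clique tree T rooted at a maximal clique C_r. Let C be a node of T with children C_1,...,C_ℓ. Then the edge sets of the induced subgraphs G[V(T_{C_1}) \ sep(C_1)], ..., G[V(T_{C_ℓ}) \ sep(C_ℓ)] are pairwise disjoint, where T_{C_i} is the subtree of T rooted at C_i, V(T_{C_i}) is the union of the cliques in it, and sep(C_i) = C_i ∩ C. -/
open Finset

/-- A graph is chordal if every cycle of length at least 4 has a chord: an edge
of the graph between two vertices of the cycle that is not an edge of the cycle. -/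
def IsChordal {V : Type*} (G : SimpleGraph V) : Prop :=
  ∀ (v : V) (w : G.Walk v v), w.IsCycle → 4 ≤ w.length →
    ∃ a b, a ∈ w.support ∧ b ∈ w.support ∧ G.Adj a b ∧ s(a, b) ∉ w.edges

/-- The clique-tree nodes lying in the subtree rooted at `c` (w.r.t. root `r`):
those nodes all of whose walks to the root pass through `c`. -/
def subtreeNodes {ι : Type*} (T : SimpleGraph ι) (r c : ι) : Set ι :=
  {i | ∀ w : T.Walk i r, c ∈ w.support}

/-- `c` is a child of `p` in the tree `T` rooted at `r`. -/
def IsChild {ι : Type*} (T : SimpleGraph ι) (r p c : ι) : Prop :=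
  T.Adj p c ∧ ∀ w : T.Walk c r, p ∈ w.support

/-- `V[T_c]`: the union of the cliques indexed by the subtree rooted at `c`. -/
def subtreeVerts {V ι : Type*} (T : SimpleGraph ι) (r c : ι) (C : ι → Finset V) : Set V :=
  {x | ∃ i ∈ subtreeNodes T r c, x ∈ C i}

/-!
If `u` lies in a clique of the subtree of `c₁` and in one of the subtree of `c₂`, the
induced-subtree property puts `u` in every clique on every walk between those two nodes.
The subtrees of distinct children are disjoint, so each such walk passes through `c₁`, `p`
and `c₂`; thus `u ∈ C c₁ ∩ C p`. Hence already the vertex sets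
`V(T_{c₁}) \ sep(c₁)` and `V(T_{c₂}) \ sep(c₂)` are disjoint.
-/

open SimpleGraph

theorem SimpleGraph.IsAcyclic.mem_support_of_adj_of_adj {ι : Type*} {T : SimpleGraph ι}
    (hT : T.IsAcyclic) {p a b : ι} (ha : T.Adj p a) (hb : T.Adj p b) (hab : a ≠ b)
    (w : T.Walk a b) : p ∈ w.support := by
  classical
  have hpath : (Walk.cons ha.symm (Walk.cons hb Walk.nil)).IsPath := by
    simp [ha.ne', hb.ne, hab]
  have hw : (w.toPath : T.Walk a b) = Walk.cons ha.symm (Walk.cons hb Walk.nil) :=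
    congrArg Subtype.val ((hT.subsingleton_path a b).elim w.toPath ⟨_, hpath⟩)
  exact w.support_toPath_subset_support (by simp [hw])

theorem mem_support_of_mem_subtreeNodes_of_notMem {ι : Type*} {T : SimpleGraph ι} {r c i j : ι}
    (hi : i ∈ subtreeNodes T r c) (hj : j ∉ subtreeNodes T r c) (w : T.Walk i j) :
    c ∈ w.support := by
  obtain ⟨q, hq⟩ : ∃ q : T.Walk j r, c ∉ q.support := by simpa [subtreeNodes] using hj
  exact ((Walk.mem_support_append_iff w q).mp (hi (w.append q))).resolve_right hq

namespace IsChild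

variable {ι : Type*} {T : SimpleGraph ι} {r p c : ι}

theorem notMem_support_of_isPath (h : IsChild T r p c) {P : T.Walk p r} (hP : P.IsPath) :
    c ∉ P.support := by
  classical
  intro hc
  have hc' : c ∈ P.reverse.support := by simpa using hc
  have hp : p ∈ (P.reverse.takeUntil c hc').reverse.support := h.2 _
  rw [Walk.support_reverse, List.mem_reverse] at hp
  exact Walk.endpoint_notMem_support_takeUntil hP.reverse hc' h.1.ne hp

theorem support_dropUntil_eq [DecidableEq ι] (hT : T.IsAcyclic) (h : IsChild T r p c) {j : ι}
    {Q : T.Walk j r} (hQ : Q.IsPath) (hc : c ∈ Q.support) {P : T.Walk p r} (hP : P.IsPath) :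
    (Q.dropUntil c hc).support = c :: P.support := by
  have hcP : (Walk.cons h.1.symm P).IsPath := hP.cons (h.notMem_support_of_isPath hP)
  have hQc := congrArg Subtype.val
    ((hT.subsingleton_path c r).elim ⟨_, hQ.dropUntil hc⟩ ⟨_, hcP⟩)
  simp only at hQc
  rw [hQc, Walk.support_cons]

end IsChild

theorem subtreeNodes_disjoint_of_isChild {ι : Type*} {T : SimpleGraph ι} (hT : T.IsTree)
    {r p c₁ c₂ : ι} (h1 : IsChild T r p c₁) (h2 : IsChild T r p c₂) (hne : c₁ ≠ c₂) :
    Disjoint (subtreeNodes T r c₁) (subtreeNodes T r c₂) := by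
  classical
  refine Set.disjoint_left.mpr fun j hj1 hj2 => hne ?_
  obtain ⟨Q, hQ, -⟩ := hT.existsUnique_path j r
  obtain ⟨P, hP, -⟩ := hT.existsUnique_path p r
  have hs1 : c₁ :: P.support <:+ Q.support :=
    h1.support_dropUntil_eq hT.isAcyclic hQ (hj1 Q) hP ▸ Q.support_dropUntil_suffix_support _
  have hs2 : c₂ :: P.support <:+ Q.support :=
    h2.support_dropUntil_eq hT.isAcyclic hQ (hj2 Q) hP ▸ Q.support_dropUntil_suffix_support _
  have hsuffix := List.suffix_of_suffix_length_le hs1 hs2 (by simp)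
  exact List.head_eq_of_cons_eq (hsuffix.eq_of_length (by simp))

theorem mem_of_forall_walk_mem_support {V ι : Type*} {T : SimpleGraph ι} {C : ι → Finset V}
    (hsubtree : ∀ (x : V) (i j : ι), x ∈ C i → x ∈ C j →
      ∃ w : T.Walk i j, ∀ m ∈ w.support, x ∈ C m)
    {x : V} {i j m : ι} (hi : x ∈ C i) (hj : x ∈ C j) (hm : ∀ w : T.Walk i j, m ∈ w.support) :
    x ∈ C m := by
  obtain ⟨w, hw⟩ := hsubtree x i j hi hj
  exact hw m (hm w)

theorem clique_tree_subtrees_edge_disjoint_general {V ι : Type*} [DecidableEq V]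
    (T : SimpleGraph ι) (hT : T.IsTree) (r : ι)
    (C : ι → Finset V)
    (hsubtree : ∀ (x : V) (i j : ι), x ∈ C i → x ∈ C j →
      ∃ w : T.Walk i j, ∀ m ∈ w.support, x ∈ C m)
    (p c₁ c₂ : ι) (h1 : IsChild T r p c₁) (h2 : IsChild T r p c₂) (hne : c₁ ≠ c₂)
    (u : V)
    (hu1 : u ∈ subtreeVerts T r c₁ C \ ((C c₁ ∩ C p : Finset V) : Set V))
    (hu2 : u ∈ subtreeVerts T r c₂ C \ ((C c₂ ∩ C p : Finset V) : Set V)) :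
    False := by
  obtain ⟨⟨i, hi, hui⟩, hu1_notMem⟩ := hu1
  obtain ⟨⟨j, hj, huj⟩, -⟩ := hu2
  have hdisj := subtreeNodes_disjoint_of_isChild hT h1 h2 hne
  have huc₁ : u ∈ C c₁ := mem_of_forall_walk_mem_support hsubtree hui huj
    (mem_support_of_mem_subtreeNodes_of_notMem hi (hdisj.notMem_of_mem_right hj))
  have huc₂ : u ∈ C c₂ := mem_of_forall_walk_mem_support hsubtree huj hui
    (mem_support_of_mem_subtreeNodes_of_notMem hj (hdisj.notMem_of_mem_left hi))
  have hup : u ∈ C p := mem_of_forall_walk_mem_support hsubtree huc₁ huc₂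
    (hT.isAcyclic.mem_support_of_adj_of_adj h1.1 h2.1 hne)
  exact hu1_notMem (by simp [huc₁, hup])

/-- for a chordal graph `G` with a rooted clique tree, and distinct
children `c₁ ≠ c₂` of a node `p`, the edge sets of the induced subgraphs
`G[V(T_{c₁}) \ sep(c₁)]` and `G[V(T_{c₂}) \ sep(c₂)]` are disjoint, where
`sep(cᵢ) = C cᵢ ∩ C p`. -/
theorem clique_tree_subtrees_edge_disjoint {V ι : Type*} [DecidableEq V]
    (G : SimpleGraph V) (hchordal : IsChordal G)
    (T : SimpleGraph ι) (hT : T.IsTree) (r : ι)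
    (C : ι → Finset V)
    (hclique : ∀ i, G.IsClique (C i : Set V))
    (hmax : ∀ i, ∀ S : Finset V, G.IsClique (S : Set V) → C i ⊆ S → S = C i)
    (hedge : ∀ u v, G.Adj u v → ∃ i, u ∈ C i ∧ v ∈ C i)
    (hsubtree : ∀ (x : V) (i j : ι), x ∈ C i → x ∈ C j →
      ∃ w : T.Walk i j, ∀ m ∈ w.support, x ∈ C m)
    (p c₁ c₂ : ι) (h1 : IsChild T r p c₁) (h2 : IsChild T r p c₂) (hne : c₁ ≠ c₂)
    (u v : V) (huv : G.Adj u v)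
    (hu1 : u ∈ subtreeVerts T r c₁ C \ ((C c₁ ∩ C p : Finset V) : Set V))
    (hv1 : v ∈ subtreeVerts T r c₁ C \ ((C c₁ ∩ C p : Finset V) : Set V))
    (hu2 : u ∈ subtreeVerts T r c₂ C \ ((C c₂ ∩ C p : Finset V) : Set V))
    (hv2 : v ∈ subtreeVerts T r c₂ C \ ((C c₂ ∩ C p : Finset V) : Set V)) :
    False :=
  clique_tree_subtrees_edge_disjoint_general T hT r C hsubtree p c₁ c₂ h1 h2 hne u hu1 hu2
end

section
/- In the merging-of-orientations construction for chordal graphs: let G be chordal with clique tree node C having children C_1,...,C_ℓ, let O_C be an acyclic orientation of lnk(C), and for each i let O_i be an acyclic orientation of G[V[T_{C_i}]] consistent with O_C restricted to E(sep(C_i), V[T_{C_i}]). Then the union orientation O = O_C ∪ O_1 ∪ ... ∪ O_ℓ is acyclic. -/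
open Finset

/-- `D` is an orientation of the symmetric edge relation `R`. -/
def Orients {V : Type*} (R D : V → V → Prop) : Prop :=
  (∀ u v, D u v → R u v) ∧ (∀ u v, R u v → (D u v ↔ ¬ D v u))

/-- The directed relation `D` is acyclic (no directed cycle). -/
def AcyclicRel {V : Type*} (D : V → V → Prop) : Prop :=
  ∀ v, ¬ Relation.TransGen D v v

/-- Edge relation of the induced subgraph `G[S]`. -/
def inducedRel {V : Type*} (G : SimpleGraph V) (S : Set V) : V → V → Prop :=
  fun u v => G.Adj u v ∧ u ∈ S ∧ v ∈ S

/-- Edge relation `E(A, B)`: edges of `G` with one endpoint in `A` and the other in `B`. -/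
def linkRel {V : Type*} (G : SimpleGraph V) (A B : Set V) : V → V → Prop :=
  fun u v => G.Adj u v ∧ ((u ∈ A ∧ v ∈ B) ∨ (v ∈ A ∧ u ∈ B))

/-! Write `P = C p` and `Sᵢ = V[T_{cᵢ}]`. By the running intersection property the regions
`Sᵢ \ P` are pairwise disjoint, every edge of the merged orientation with an endpoint outside `P`
lies inside one region and belongs to `Oᵢ` there, and edges inside `P` belong to `OC`. A directed
cycle avoiding `P` is therefore an `Oᵢ`-cycle. A cycle through `P` splits into `OC`-edges inside
the clique `P` and excursions from `b ∈ P` through one region back to `w ∈ P`; such an excursion is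
an `Oᵢ`-path, so `OC` orients `bw` as `b → w`, since `Oᵢ` agrees with `OC` on the separator and is
acyclic. The cycle thus collapses to an `OC`-cycle. -/

theorem SimpleGraph.IsAcyclic.support_subset_of_isPath {V : Type*} {G : SimpleGraph V}
    (hG : G.IsAcyclic) {u v : V} {p : G.Walk u v} (hp : p.IsPath) (q : G.Walk u v) :
    p.support ⊆ q.support := by
  classical
  obtain rfl : p = q.bypass :=
    congrArg Subtype.val ((hG.subsingleton_path u v).elim ⟨p, hp⟩ ⟨q.bypass, q.bypass_isPath⟩)
  exact q.support_bypass_subset_support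

section RootedTree

variable {ι : Type*} {T : SimpleGraph ι} {r p c k m z : ι}

open SimpleGraph

theorem mem_support_of_mem_subtreeNodes_of_notMem_s11 (hk : k ∈ subtreeNodes T r z)
    (hm : m ∉ subtreeNodes T r z) (w : T.Walk k m) : z ∈ w.support := by
  obtain ⟨u, hu⟩ : ∃ u : T.Walk m r, z ∉ u.support := by simpa [subtreeNodes] using hm
  simpa [Walk.mem_support_append_iff, hu] using hk (w.append u)

theorem IsChild.parent_notMem_subtreeNodes (hT : T.IsTree) (hc : IsChild T r p c) :
    p ∉ subtreeNodes T r c := by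
  obtain ⟨A, hA⟩ := hT.connected.preconnected.exists_isPath c r
  obtain ⟨q, hq⟩ := hT.connected.preconnected.exists_isPath r p
  have hcq : c ∉ q.support := hT.isAcyclic.ne_mem_support_of_support_of_adj_of_isPath hA.reverse
    hq hc.1.symm (by simpa using hc.2 A)
  exact fun h => hcq (by simpa using h q.reverse)

theorem IsChild.eq_snd_of_mem_subtreeNodes (hT : T.IsTree) (hc : IsChild T r p c)
    (hk : k ∈ subtreeNodes T r c) {B : T.Walk p k} (hB : B.IsPath) : c = B.snd :=
  hT.isAcyclic.eq_snd_of_adj_start hB hc.1 <| by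
    simpa using
      mem_support_of_mem_subtreeNodes_of_notMem_s11 hk (hc.parent_notMem_subtreeNodes hT) B.reverse

theorem IsChild.eq_of_mem_subtreeNodes {c' : ι} (hT : T.IsTree) (hc : IsChild T r p c)
    (hc' : IsChild T r p c') (hk : k ∈ subtreeNodes T r c) (hk' : k ∈ subtreeNodes T r c') :
    c = c' := by
  obtain ⟨B, hB⟩ := hT.connected.preconnected.exists_isPath p k
  rw [hc.eq_snd_of_mem_subtreeNodes hT hk hB, hc'.eq_snd_of_mem_subtreeNodes hT hk' hB]

theorem exists_isChild_mem_subtreeNodes (hT : T.IsTree) (hk : k ∈ subtreeNodes T r p)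
    (hne : k ≠ p) : ∃ c, IsChild T r p c ∧ k ∈ subtreeNodes T r c := by
  classical
  obtain ⟨B, hB⟩ := hT.connected.preconnected.exists_isPath p k
  obtain ⟨c, hadj, q, rfl⟩ := Walk.exists_eq_cons_of_ne hne.symm B
  obtain ⟨-, hpq⟩ := (Walk.cons_isPath_iff hadj q).1 hB
  refine ⟨c, ⟨hadj, fun w => ?_⟩, fun w => ?_⟩
  · by_contra hpw
    simpa [Walk.mem_support_append_iff, hpq, hpw] using hk (q.reverse.append w)
  · have hpw : p ∈ w.support := hk w
    have hsub := hT.isAcyclic.support_subset_of_isPath hB (w.takeUntil p hpw).reverse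
    have : c ∈ (w.takeUntil p hpw).support := by simpa using hsub (by simp)
    exact w.support_takeUntil_subset_support hpw this

theorem IsChild.parent_mem_support (hT : T.IsTree) (hc : IsChild T r p c)
    (hk : k ∈ subtreeNodes T r c) (hm : m ∉ subtreeNodes T r c) (w : T.Walk k m) :
    p ∈ w.support := by
  classical
  obtain ⟨u, hu⟩ : ∃ u : T.Walk m r, c ∉ u.support := by simpa [subtreeNodes] using hm
  have hcw := mem_support_of_mem_subtreeNodes_of_notMem_s11 hk hm w
  set q := (w.dropUntil c hcw).bypass
  have hqw : q.support ⊆ w.support := fun _ h =>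
    w.support_dropUntil_subset_support hcw ((w.dropUntil c hcw).support_bypass_subset_support h)
  by_contra hpw
  have hpq : p ∉ q.support := fun h => hpw (hqw h)
  have hpu : p ∈ u.support := by
    simpa [Walk.mem_support_append_iff, hpq] using hc.2 (q.append u)
  have hsub := hT.isAcyclic.support_subset_of_isPath
    ((Walk.cons_isPath_iff hc.1 q).2 ⟨(w.dropUntil c hcw).bypass_isPath, hpq⟩)
    (u.takeUntil p hpu).reverse
  exact hu (u.support_takeUntil_subset_support hpu (by simpa using hsub (by simp)))

end RootedTree

def RunningIntersection {V ι : Type*} (T : SimpleGraph ι) (C : ι → Finset V) : Prop :=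
  ∀ (x : V) (i j : ι), x ∈ C i → x ∈ C j → ∃ w : T.Walk i j, ∀ m ∈ w.support, x ∈ C m

section CliqueTree

variable {V ι : Type*} {T : SimpleGraph ι} {C : ι → Finset V} {r p c k m : ι} {x : V}

theorem RunningIntersection.mem_of_mem_subtreeNodes_of_notMem (hC : RunningIntersection T C)
    (hxk : x ∈ C k) (hxm : x ∈ C m) (hk : k ∈ subtreeNodes T r c)
    (hm : m ∉ subtreeNodes T r c) : x ∈ C c := by
  obtain ⟨w, hw⟩ := hC x k m hxk hxm
  exact hw c (mem_support_of_mem_subtreeNodes_of_notMem_s11 hk hm w)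

theorem RunningIntersection.mem_parent_of_mem_subtreeNodes_of_notMem (hT : T.IsTree)
    (hC : RunningIntersection T C) (hc : IsChild T r p c) (hxk : x ∈ C k) (hxm : x ∈ C m)
    (hk : k ∈ subtreeNodes T r c) (hm : m ∉ subtreeNodes T r c) : x ∈ C p := by
  obtain ⟨w, hw⟩ := hC x k m hxk hxm
  exact hw p (hc.parent_mem_support hT hk hm w)

theorem mem_subtreeVerts_of_mem (hx : x ∈ C c) : x ∈ subtreeVerts T r c C :=
  ⟨c, fun w => w.start_mem_support, hx⟩

theorem RunningIntersection.mem_child_of_mem_parent (hT : T.IsTree)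
    (hC : RunningIntersection T C) (hc : IsChild T r p c) (hx : x ∈ subtreeVerts T r c C)
    (hxp : x ∈ C p) : x ∈ C c := by
  obtain ⟨k, hk, hxk⟩ := hx
  exact hC.mem_of_mem_subtreeNodes_of_notMem hxk hxp hk (hc.parent_notMem_subtreeNodes hT)

theorem RunningIntersection.mem_parent_of_mem_subtreeVerts_of_mem_subtreeVerts {c' : ι}
    (hT : T.IsTree) (hC : RunningIntersection T C) (hc : IsChild T r p c)
    (hc' : IsChild T r p c') (hne : c ≠ c') (hx : x ∈ subtreeVerts T r c C)
    (hx' : x ∈ subtreeVerts T r c' C) : x ∈ C p := by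
  obtain ⟨k, hk, hxk⟩ := hx
  obtain ⟨m, hm, hxm⟩ := hx'
  exact hC.mem_parent_of_mem_subtreeNodes_of_notMem hT hc hxk hxm hk
    fun hm' => hne (hc.eq_of_mem_subtreeNodes hT hc' hm' hm)

theorem exists_isChild_mem_subtreeVerts (hT : T.IsTree) (hx : x ∈ subtreeVerts T r p C)
    (hxp : x ∉ C p) : ∃ c, IsChild T r p c ∧ x ∈ subtreeVerts T r c C := by
  obtain ⟨k, hk, hxk⟩ := hx
  obtain ⟨c, hc, hkc⟩ := exists_isChild_mem_subtreeNodes hT hk (by rintro rfl; exact hxp hxk)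
  exact ⟨c, hc, k, hkc, hxk⟩

theorem RunningIntersection.mem_child_of_adj {G : SimpleGraph V} {u : V} (hT : T.IsTree)
    (hC : RunningIntersection T C) (hedge : ∀ u v, G.Adj u v → ∃ i, u ∈ C i ∧ v ∈ C i)
    (hc : IsChild T r p c) (hu : u ∈ C p) (hx : x ∈ subtreeVerts T r c C) (hxp : x ∉ C p)
    (hadj : G.Adj u x) : u ∈ C c := by
  obtain ⟨k, hk, hxk⟩ := hx
  obtain ⟨m, hum, hxm⟩ := hedge u x hadj
  by_cases hm : m ∈ subtreeNodes T r c
  · exact hC.mem_of_mem_subtreeNodes_of_notMem hum hu hm (hc.parent_notMem_subtreeNodes hT)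
  · exact absurd (hC.mem_parent_of_mem_subtreeNodes_of_notMem hT hc hxk hxm hk hm) hxp

theorem RunningIntersection.exists_isChild_of_linkRel {G : SimpleGraph V} {u w : V}
    (hT : T.IsTree) (hC : RunningIntersection T C)
    (hedge : ∀ u v, G.Adj u v → ∃ i, u ∈ C i ∧ v ∈ C i)
    (h : linkRel G (C p : Set V) (subtreeVerts T r p C) u w) (huw : u ∉ C p ∨ w ∉ C p) :
    ∃ c, IsChild T r p c ∧ u ∈ subtreeVerts T r c C ∧ w ∈ subtreeVerts T r c C := by
  obtain ⟨hadj, ⟨hu, hw⟩ | ⟨hw, hu⟩⟩ := h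
  · have hwp : w ∉ C p := huw.resolve_left (not_not.2 hu)
    obtain ⟨c, hc, hwc⟩ := exists_isChild_mem_subtreeVerts hT hw hwp
    exact ⟨c, hc, mem_subtreeVerts_of_mem (hC.mem_child_of_adj hT hedge hc hu hwc hwp hadj), hwc⟩
  · have hup : u ∉ C p := huw.resolve_right (not_not.2 hw)
    obtain ⟨c, hc, huc⟩ := exists_isChild_mem_subtreeVerts hT hu hup
    exact ⟨c, hc, huc,
      mem_subtreeVerts_of_mem (hC.mem_child_of_adj hT hedge hc hw huc hup hadj.symm)⟩

end CliqueTree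

section Gluing

open Relation

variable {V κ : Type*} {R D : V → V → Prop} {O : κ → V → V → Prop} {P : Set V}
  {S : κ → Set V} {a y z : V}

theorem rel_of_transGen_of_total {Q : V → V → Prop} (hQ : AcyclicRel Q)
    (htotal : a ≠ z → R a z ∨ R z a) (hsub : R z a → Q z a) (h : TransGen Q a z) : R a z := by
  have hne : a ≠ z := by rintro rfl; exact hQ a h
  exact (htotal hne).resolve_right fun hza => hQ a (h.tail (hsub hza))

theorem transGen_meets_or_transGen_region
    (houtside : ∀ u w, D u w → u ∉ P ∨ w ∉ P → ∃ i, u ∈ S i ∧ w ∈ S i ∧ O i u w)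
    (hS : ∀ x i j, x ∉ P → x ∈ S i → x ∈ S j → i = j) (h : TransGen D a y) :
    (∃ b ∈ P, ReflTransGen D a b ∧ ReflTransGen D b y) ∨
      ∃ i, y ∉ P ∧ y ∈ S i ∧ TransGen (O i) a y := by
  induction h with
  | @single y hay =>
    by_cases ha : a ∈ P
    · exact Or.inl ⟨a, ha, .refl, .single hay⟩
    by_cases hy : y ∈ P
    · exact Or.inl ⟨y, hy, .single hay, .refl⟩
    obtain ⟨i, -, hyi, hO⟩ := houtside a y hay (Or.inl ha)
    exact Or.inr ⟨i, hy, hyi, .single hO⟩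
  | @tail y z hay hyz ih =>
    by_cases hz : z ∈ P
    · exact Or.inl ⟨z, hz, (hay.tail hyz).to_reflTransGen, .refl⟩
    rcases ih with ⟨b, hb, hab, hby⟩ | ⟨i, hy, hyi, hO⟩
    · exact Or.inl ⟨b, hb, hab, hby.tail hyz⟩
    · obtain ⟨j, hyj, hzj, hO'⟩ := houtside y z hyz (Or.inl hy)
      obtain rfl : i = j := hS y i j hy hyi hyj
      exact Or.inr ⟨i, hz, hzj, hO.tail hO'⟩

variable (R D O P S) in
structure IsGluing : Prop where
  inside : ∀ u w, D u w → u ∈ P → w ∈ P → R u w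
  outside : ∀ u w, D u w → u ∉ P ∨ w ∉ P → ∃ i, u ∈ S i ∧ w ∈ S i ∧ O i u w
  region_unique : ∀ x i j, x ∉ P → x ∈ S i → x ∈ S j → i = j
  collapse : ∀ i b w, b ∈ P → w ∈ P → b ∈ S i → w ∈ S i → TransGen (O i) b w → R b w

variable (R O P S) in
def GluedReach (a y : V) : Prop :=
  (y ∈ P → ReflTransGen R a y) ∧
    (y ∉ P → ∃ i, ∃ b ∈ P, b ∈ S i ∧ y ∈ S i ∧ ReflTransGen R a b ∧ TransGen (O i) b y)

theorem GluedReach.transGen_of_mem (hG : IsGluing R D O P S) (h : GluedReach R O P S a y)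
    (hyz : D y z) (hz : z ∈ P) : TransGen R a z := by
  by_cases hy : y ∈ P
  · exact .tail' (h.1 hy) (hG.inside y z hyz hy hz)
  obtain ⟨i, b, hb, hbi, hyi, hab, hby⟩ := h.2 hy
  obtain ⟨j, hyj, hzj, hO⟩ := hG.outside y z hyz (Or.inl hy)
  obtain rfl : i = j := hG.region_unique y i j hy hyi hyj
  exact .tail' hab (hG.collapse i b z hb hz hbi hzj (hby.tail hO))

theorem GluedReach.tail (hG : IsGluing R D O P S) (h : GluedReach R O P S a y) (hyz : D y z) :
    GluedReach R O P S a z := by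
  refine ⟨fun hz => (h.transGen_of_mem hG hyz hz).to_reflTransGen, fun hz => ?_⟩
  obtain ⟨i, hyi, hzi, hO⟩ := hG.outside y z hyz (Or.inr hz)
  by_cases hy : y ∈ P
  · exact ⟨i, y, hy, hyi, hzi, h.1 hy, .single hO⟩
  obtain ⟨j, b, hb, hbj, hyj, hab, hby⟩ := h.2 hy
  obtain rfl : j = i := hG.region_unique y j i hy hyj hyi
  exact ⟨j, b, hb, hbj, hzi, hab, hby.tail hO⟩

theorem IsGluing.acyclicRel (hG : IsGluing R D O P S) (hR : AcyclicRel R)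
    (hO : ∀ i, AcyclicRel (O i)) : AcyclicRel D := by
  intro v hv
  rcases transGen_meets_or_transGen_region hG.outside hG.region_unique hv with
    ⟨a, ha, hva, hav⟩ | ⟨i, -, -, hvv⟩
  · obtain ⟨y, hay, hya⟩ := TransGen.tail'_iff.1 (.trans_right hav (hv.trans_left hva))
    have hreach : GluedReach R O P S a y := by
      clear hya
      induction hay with
      | refl => exact ⟨fun _ => .refl, fun h => absurd ha h⟩
      | tail _ hbc ih => exact ih.tail hG hbc
    exact hR a (hreach.transGen_of_mem hG hya ha)
  · exact hO i v hvv

end Gluing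

theorem Orients.total_of_isClique {V : Type*} {G : SimpleGraph V} {A B : Set V}
    {D : V → V → Prop} (hD : Orients (linkRel G A B) D) (hA : G.IsClique A) (hAB : A ⊆ B)
    {u w : V} (hu : u ∈ A) (hw : w ∈ A) (hne : u ≠ w) : D u w ∨ D w u := by
  by_cases h : D w u
  · exact Or.inr h
  · exact Or.inl ((hD.2 u w ⟨hA hu hw hne, Or.inl ⟨hu, hAB hw⟩⟩).2 h)

theorem merged_orientation_acyclic_general {V ι : Type*} [DecidableEq V]
    (G : SimpleGraph V)
    (T : SimpleGraph ι) (hT : T.IsTree) (r : ι)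
    (C : ι → Finset V)
    (hclique : ∀ i, G.IsClique (C i : Set V))
    (hedge : ∀ u v, G.Adj u v → ∃ i, u ∈ C i ∧ v ∈ C i)
    (hsubtree : ∀ (x : V) (i j : ι), x ∈ C i → x ∈ C j →
      ∃ w : T.Walk i j, ∀ m ∈ w.support, x ∈ C m)
    (p : ι) (ℓ : ℕ) (c : Fin ℓ → ι)
    (hchild : ∀ i, IsChild T r p (c i)) (hcinj : Function.Injective c)
    (hallchild : ∀ j, IsChild T r p j → ∃ i, c i = j)
    (OC : V → V → Prop)
    (hOCor : Orients (linkRel G (C p : Set V) (subtreeVerts T r p C)) OC)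
    (hOCacyc : AcyclicRel OC)
    (O : Fin ℓ → (V → V → Prop))
    (hOor : ∀ i, Orients (inducedRel G (subtreeVerts T r (c i) C)) (O i))
    (hOacyc : ∀ i, AcyclicRel (O i))
    (hcons : ∀ i u v,
      linkRel G ((C (c i) ∩ C p : Finset V) : Set V) (subtreeVerts T r (c i) C) u v →
      (O i u v ↔ OC u v)) :
    AcyclicRel (fun u v => OC u v ∨ ∃ i, O i u v) := by
  have hC : RunningIntersection T C := hsubtree
  have hsep : ∀ i x, x ∈ subtreeVerts T r (c i) C → x ∈ C p →
      x ∈ ((C (c i) ∩ C p : Finset V) : Set V) := fun i x hx hxp =>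
    Finset.mem_coe.2 (Finset.mem_inter.2 ⟨hC.mem_child_of_mem_parent hT (hchild i) hx hxp, hxp⟩)
  have hagree : ∀ i u w, u ∈ subtreeVerts T r (c i) C → w ∈ subtreeVerts T r (c i) C →
      u ∈ C p ∨ w ∈ C p → (O i u w ↔ OC u w) := by
    intro i u w hu hw huw
    by_cases hadj : G.Adj u w
    · exact hcons i u w
        ⟨hadj, huw.imp (fun h => ⟨hsep i u hu h, hw⟩) (fun h => ⟨hsep i w hw h, hu⟩)⟩
    · exact iff_of_false (fun h => hadj ((hOor i).1 u w h).1) (fun h => hadj (hOCor.1 u w h).1)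
  refine IsGluing.acyclicRel (P := C p) (S := fun i => subtreeVerts T r (c i) C)
    ⟨?_, ?_, ?_, ?_⟩ hOCacyc hOacyc
  · rintro u w (h | ⟨i, h⟩) hu hw
    · exact h
    · exact (hagree i u w ((hOor i).1 u w h).2.1 ((hOor i).1 u w h).2.2 (Or.inl hu)).1 h
  · rintro u w (h | ⟨i, h⟩) huw
    · obtain ⟨z, hz, hu, hw⟩ := hC.exists_isChild_of_linkRel hT hedge (hOCor.1 u w h) huw
      obtain ⟨i, rfl⟩ := hallchild z hz
      exact ⟨i, hu, hw, (hagree i u w hu hw ((hOCor.1 u w h).2.imp (·.1) (·.1))).2 h⟩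
    · exact ⟨i, ((hOor i).1 u w h).2.1, ((hOor i).1 u w h).2.2, h⟩
  · intro x i j hx hi hj
    by_contra hij
    exact hx (hC.mem_parent_of_mem_subtreeVerts_of_mem_subtreeVerts hT (hchild i) (hchild j)
      (hcinj.ne hij) hi hj)
  · intro i b w hb hw hbi hwi hbw
    exact rel_of_transGen_of_total (hOacyc i)
      (hOCor.total_of_isClique (hclique p) (fun x hx => mem_subtreeVerts_of_mem hx) hb hw)
      (hagree i w b hwi hbi (Or.inl hw)).2 hbw

/-- merging orientations along a clique tree stays acyclic.  Let
`G` be chordal with rooted clique tree `T`, `p` a node with children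
`c 0, …, c (ℓ-1)`, `OC` an acyclic orientation of `lnk(C p)`, and for each `i`
let `Oᵢ` be an acyclic orientation of `G[V[T_{cᵢ}]]` consistent with `OC`
restricted to `E(sep(cᵢ), V[T_{cᵢ}])`.  Then the union orientation
`OC ∪ O₀ ∪ … ∪ O_{ℓ-1}` is acyclic. -/
theorem merged_orientation_acyclic {V ι : Type*} [Fintype V] [DecidableEq V]
    (G : SimpleGraph V) (hchordal : IsChordal G)
    (T : SimpleGraph ι) (hT : T.IsTree) (r : ι)
    (C : ι → Finset V)
    (hclique : ∀ i, G.IsClique (C i : Set V))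
    (hmax : ∀ i, ∀ S : Finset V, G.IsClique (S : Set V) → C i ⊆ S → S = C i)
    (hedge : ∀ u v, G.Adj u v → ∃ i, u ∈ C i ∧ v ∈ C i)
    (hsubtree : ∀ (x : V) (i j : ι), x ∈ C i → x ∈ C j →
      ∃ w : T.Walk i j, ∀ m ∈ w.support, x ∈ C m)
    (p : ι) (ℓ : ℕ) (c : Fin ℓ → ι)
    (hchild : ∀ i, IsChild T r p (c i)) (hcinj : Function.Injective c)
    (hallchild : ∀ j, IsChild T r p j → ∃ i, c i = j)
    (OC : V → V → Prop)
    (hOCor : Orients (linkRel G (C p : Set V) (subtreeVerts T r p C)) OC)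
    (hOCacyc : AcyclicRel OC)
    (O : Fin ℓ → (V → V → Prop))
    (hOor : ∀ i, Orients (inducedRel G (subtreeVerts T r (c i) C)) (O i))
    (hOacyc : ∀ i, AcyclicRel (O i))
    (hcons : ∀ i u v,
      linkRel G ((C (c i) ∩ C p : Finset V) : Set V) (subtreeVerts T r (c i) C) u v →
      (O i u v ↔ OC u v)) :
    AcyclicRel (fun u v => OC u v ∨ ∃ i, O i u v) :=
  merged_orientation_acyclic_general G T hT r C hclique hedge hsubtree p ℓ c hchild hcinj hallchild
    OC hOCor hOCacyc O hOor hOacyc hcons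
end

section
/- Weighted directed matrix-tree theorem: let G = (V,E,w) be a weighted directed graph on n vertices with positive weights, and r ∈ V. Then the sum over all spanning out-arborescences T rooted at r of ∏_{e∈T} w(e) equals det(L^r_{1,w}), the determinant of the weighted in-Laplacian L_{1,w} = D_in,w - A_w with the r-th row and column removed. -/
/-!
Column `j` of the reduced in-Laplacian is `∑ u, w u j • (e j - e u)`, where `e r = 0`.
Expanding the determinant multilinearly in the columns gives a sum over all parent maps
`f` of `∏ v, w (f v) v` times `det (1 - P f)`, with `P f` the 0-1 matrix of `f`.
If `f` has a cycle, the indicator of the vertices that do not descend from `r` is a left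
null vector of `1 - P f`. Otherwise the number of ancestors strictly increases along the
edges of `f`, so `1 - P f` is unitriangular for that grading and has determinant `1`.
Since `w` vanishes off `E`, exactly the arborescences survive.
-/

open Finset
open scoped Classical

/-- The weighted in-Laplacian `L_{1,w} = D_in,w - A_w` of a weighted digraph. -/
noncomputable def inLaplacian {V : Type*} [Fintype V] [DecidableEq V]
    (w : V → V → ℝ) : Matrix V V ℝ :=
  fun i j => (if i = j then ∑ u, w u i else 0) - w i j

/-- Determinant of the in-Laplacian with row and column `r` removed. -/
noncomputable def reducedDet {V : Type*} [Fintype V] [DecidableEq V]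
    (w : V → V → ℝ) (r : V) : ℝ :=
  Matrix.det ((inLaplacian w).submatrix
    (Subtype.val : {v : V // v ≠ r} → V) (Subtype.val : {v : V // v ≠ r} → V))

/-- The directed "is-parent-of" relation induced by a parent map `f`:
`parentRel r f u v` holds when `u` is the parent of `v ≠ r`. -/
def parentRel {V : Type*} (r : V) (f : {v : V // v ≠ r} → V) : V → V → Prop :=
  fun u v => ∃ h : v ≠ r, f ⟨v, h⟩ = u

/-- `f` encodes a spanning out-arborescence of the digraph `E` rooted at `r`:
every vertex `v ≠ r` has a unique parent `f v` with `(f v, v)` an edge, and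
the parent relation is acyclic (hence every vertex is reached from `r`). -/
def IsArborescence {V : Type*} (E : V → V → Prop) (r : V)
    (f : {v : V // v ≠ r} → V) : Prop :=
  (∀ v : {v : V // v ≠ r}, E (f v) v.1) ∧
    (∀ v, ¬ Relation.TransGen (parentRel r f) v v)

theorem Matrix.det_of_sum_smul {ι κ R : Type*} [Fintype ι] [DecidableEq ι] [Fintype κ]
    [CommRing R] (c : ι → κ → R) (M : ι → κ → ι → R) :
    (Matrix.of fun i => ∑ k, c i k • M i k).det =
      ∑ g : ι → κ, (∏ i, c i (g i)) * (Matrix.of fun i => M i (g i)).det := by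
  refine (detRowAlternating.toMultilinearMap.map_sum fun i k => c i k • M i k).trans ?_
  refine sum_congr rfl fun g _ => ?_
  exact detRowAlternating.map_smul_univ (fun i => c i (g i)) (fun i => M i (g i))

theorem Relation.card_transGen_lt {α : Type*} [Fintype α] {R : α → α → Prop}
    (hR : ∀ a, ¬ Relation.TransGen R a a) {a b : α} (h : R a b) :
    #{c | Relation.TransGen R c a} < #{c | Relation.TransGen R c b} := by
  refine card_lt_card <| (ssubset_iff_of_subset fun c => ?_).2 ⟨a, ?_, ?_⟩
  · simpa using fun hc => hc.tail h
  · simpa using .single h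
  · simpa using hR a

theorem Relation.transGen_self_of_reflTransGen {α : Type*} {R : α → α → Prop}
    (hR : Relator.LeftUnique R) {a b : α} (hab : Relation.ReflTransGen R a b)
    (hb : Relation.TransGen R b b) : Relation.TransGen R a a := by
  induction hab using Relation.ReflTransGen.head_induction_on with
  | refl => exact hb
  | head hac _ ih =>
    obtain ⟨d, hcd, hdc⟩ := Relation.TransGen.tail'_iff.1 ih
    exact .head' hac (hR hac hdc ▸ hcd)

section ParentRel

variable {V : Type*} {r : V} {f : {v : V // v ≠ r} → V}

theorem parentRel_leftUnique : Relator.LeftUnique (parentRel r f) := by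
  rintro a b u ⟨-, rfl⟩ ⟨-, rfl⟩
  rfl

theorem reflTransGen_root_parent_iff (j : {v : V // v ≠ r}) :
    Relation.ReflTransGen (parentRel r f) r (f j) ↔ Relation.ReflTransGen (parentRel r f) r j := by
  refine ⟨fun h => h.tail ⟨j.2, rfl⟩, fun h => ?_⟩
  obtain h | ⟨c, hc, hcj⟩ := (Relation.ReflTransGen.cases_tail_iff _ _ _).1 h
  · exact absurd h j.2
  · exact parentRel_leftUnique hcj ⟨j.2, rfl⟩ ▸ hc

theorem not_reflTransGen_root_of_transGen {v : V} (hv : Relation.TransGen (parentRel r f) v v) :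
    ¬ Relation.ReflTransGen (parentRel r f) r v := fun h => by
  obtain ⟨-, -, hr, -⟩ := Relation.TransGen.tail'_iff.1
    (Relation.transGen_self_of_reflTransGen parentRel_leftUnique h hv)
  exact hr rfl

end ParentRel

open scoped Matrix

section ParentMatrix

variable {V : Type*} [DecidableEq V] {r : V} (R : Type*)

def parentMatrix [Zero R] [One R] (r : V) (f : {v : V // v ≠ r} → V) :
    Matrix {v : V // v ≠ r} {v : V // v ≠ r} R :=
  Matrix.of fun i j => if (i : V) = f j then 1 else 0

variable {R} [CommRing R] {f : {v : V // v ≠ r} → V}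

theorem parentRel_of_parentMatrix_ne_zero {i j : {v : V // v ≠ r}}
    (h : parentMatrix R r f i j ≠ 0) : parentRel r f i j :=
  ⟨j.2, by by_contra hne; exact h (if_neg (Ne.symm hne))⟩

variable [Fintype V]

theorem det_one_sub_parentMatrix_of_acyclic
    (hf : ∀ v, ¬ Relation.TransGen (parentRel r f) v v) :
    (1 - parentMatrix R r f).det = 1 := by
  set depth : {v : V // v ≠ r} → ℕ := fun j => #{a | Relation.TransGen (parentRel r f) a j}
  have hP : ∀ i j, parentMatrix R r f i j ≠ 0 → depth i < depth j := fun i j h =>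
    Relation.card_transGen_lt hf (parentRel_of_parentMatrix_ne_zero h)
  have htri : (1 - parentMatrix R r f).BlockTriangular depth :=
    (Matrix.blockTriangular_one).sub fun i j hji => by_contra fun h => (hP i j h).not_gt hji
  rw [htri.det]
  refine prod_eq_one fun d _ => ?_
  rw [show (1 - parentMatrix R r f).toSquareBlock depth d = 1 from ?_, Matrix.det_one]
  ext i j
  have : parentMatrix R r f i j = 0 := by_contra fun h => (hP i j h).ne (i.2.trans j.2.symm)
  simp [Matrix.toSquareBlock_def, Matrix.one_apply, this, Subtype.ext_iff]

theorem vecMul_parentMatrix {x : V → R} (hx : x r = 0) :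
    (fun i : {v : V // v ≠ r} => x i) ᵥ* parentMatrix R r f = fun j => x (f j) := by
  ext j
  have := Fintype.sum_eq_add_sum_subtype_ne (fun i => if i = f j then x i else 0) r
  simp only [sum_ite_eq', mem_univ, if_true, hx, ite_self, zero_add] at this
  simpa [Matrix.vecMul, dotProduct, parentMatrix] using this.symm

theorem det_one_sub_parentMatrix_of_cycle [IsDomain R] {v : V}
    (hv : Relation.TransGen (parentRel r f) v v) :
    (1 - parentMatrix R r f).det = 0 := by
  set x : V → R := fun u => if Relation.ReflTransGen (parentRel r f) r u then 0 else 1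
  have hxr : x r = 0 := if_pos .refl
  refine Matrix.exists_vecMul_eq_zero_iff.1 ⟨fun i => x i, fun h => ?_, ?_⟩
  · obtain ⟨-, -, hvr, -⟩ := Relation.TransGen.tail'_iff.1 hv
    have := congrFun h ⟨v, hvr⟩
    simp [x, not_reflTransGen_root_of_transGen hv] at this
  · ext j
    simp [Matrix.vecMul_sub, vecMul_parentMatrix hxr, x, reflTransGen_root_parent_iff]

end ParentMatrix

theorem reducedDet_eq_sum_parentMaps {V : Type*} [Fintype V] [DecidableEq V]
    (w : V → V → ℝ) (r : V) :
    reducedDet w r = ∑ f : {v : V // v ≠ r} → V,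
      (∏ v : {v : V // v ≠ r}, w (f v) v) * (1 - parentMatrix ℝ r f).det := by
  have hcols : ((inLaplacian w).submatrix Subtype.val Subtype.val)ᵀ =
      Matrix.of fun j : {v : V // v ≠ r} =>
        ∑ u, w u j • (1 - parentMatrix ℝ r fun _ => u)ᵀ j := by
    ext j i
    rcases eq_or_ne i j with rfl | hij
    · simp [inLaplacian, parentMatrix, mul_sub, sum_sub_distrib]
    · simp [inLaplacian, parentMatrix, hij.symm, Subtype.val_injective.ne hij]
  rw [reducedDet, ← Matrix.det_transpose, hcols, Matrix.det_of_sum_smul]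
  refine sum_congr rfl fun f _ => ?_
  rw [← Matrix.det_transpose (1 - parentMatrix ℝ r f)]
  rfl

theorem weighted_directed_matrix_tree_general {V : Type*} [Fintype V] [DecidableEq V]
    (E : V → V → Prop) (w : V → V → ℝ) (r : V)
    (hzero : ∀ i j, ¬ E i j → w i j = 0) :
    ∑ f ∈ Finset.univ.filter (IsArborescence E r),
        ∏ v : {v : V // v ≠ r}, w (f v) v.1
      = reducedDet w r := by
  rw [reducedDet_eq_sum_parentMaps, sum_filter]
  refine sum_congr rfl fun f _ => ?_
  by_cases hcyc : ∃ v, Relation.TransGen (parentRel r f) v v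
  · obtain ⟨v, hv⟩ := hcyc
    rw [det_one_sub_parentMatrix_of_cycle hv, mul_zero, if_neg fun hf => hf.2 v hv]
  · rw [not_exists] at hcyc
    rw [det_one_sub_parentMatrix_of_acyclic hcyc, mul_one]
    by_cases hE : ∀ v : {v : V // v ≠ r}, E (f v) v
    · rw [if_pos ⟨hE, hcyc⟩]
    · obtain ⟨v, hv⟩ := not_forall.1 hE
      rw [if_neg fun hf => hv (hf.1 v), prod_eq_zero (mem_univ v) (hzero _ _ hv)]

/-- the weighted directed matrix-tree theorem.  For a weighted
digraph with edge set `E`, positive weights `w` on edges (and zero elsewhere),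
the sum over all spanning out-arborescences rooted at `r` of the product of
their edge weights equals `det(L^r_{1,w})`. -/
theorem weighted_directed_matrix_tree {V : Type*} [Fintype V] [DecidableEq V]
    (E : V → V → Prop) (w : V → V → ℝ) (r : V)
    (hirr : ∀ i, ¬ E i i)
    (hpos : ∀ i j, E i j → 0 < w i j)
    (hzero : ∀ i j, ¬ E i j → w i j = 0) :
    ∑ f ∈ Finset.univ.filter (IsArborescence E r),
        ∏ v : {v : V // v ≠ r}, w (f v) v.1
      = reducedDet w r :=
  weighted_directed_matrix_tree_general E w r hzero
end

section
/- EWA bounded-differences stability: suppose the EWA forecaster with parameter η > 0 and finite expert class C (all experts P with min_x P(x) ≥ τ) is run on sample sequences differing in exactly one coordinate (say the first sample x^(1) vs x^(1)'). Then for every t and every y, the predicted mixtures satisfy τ^{2η} ≤ P̂'_t(y)/P̂_t(y) ≤ τ^{-2η}, and consequently |KL(P*‖(1/T)∑_t P̂'_t) - KL(P*‖(1/T)∑_t P̂_t)| ≤ 2η·log(1/τ). -/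
/-!
Changing the first sample changes one factor `Q(x⁽¹⁾)^η` of every expert's weight, and since
`τ ≤ Q ≤ 1` that factor moves by at most `τ^{±η}`. A ratio of two weighted sums whose weights all
move by at most `τ^{±η}` moves by at most `τ^{±2η}`, and this pointwise bound survives averaging
over rounds. Finally the difference of the two KL divergences is a `P*`-average of
`log(M/M')`, each term of which is at most `log(τ^{-2η}) = 2η log(1/τ)` in absolute value.
-/

open Finset

/-- KL divergence between two distributions on a finite set. -/
noncomputable def klDiv {X : Type*} [Fintype X] (P Q : X → ℝ) : ℝ :=
  ∑ x, P x * Real.log (P x / Q x)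

/-- The EWA forecaster's prediction at round `t` (a mixture of the experts in
`C` with exponential weights based on the samples observed before round `t`). -/
noncomputable def ewaPred {X : Type*} [Fintype X] (C : Finset (X → ℝ)) (η : ℝ)
    {T : ℕ} (xs : Fin T → X) (t : Fin T) : X → ℝ :=
  fun y =>
    (∑ Q ∈ C, (∏ s ∈ Finset.univ.filter (fun s : Fin T => s < t), Q (xs s) ^ η) * Q y) /
      (∑ Q ∈ C, ∏ s ∈ Finset.univ.filter (fun s : Fin T => s < t), Q (xs s) ^ η)

section Inequalities

theorem mul_prod_le_prod_of_eq_of_ne {ι : Type*} [DecidableEq ι] {S : Finset ι} {g h : ι → ℝ}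
    {c : ℝ} (z : ι) (hg : ∀ i ∈ S, 0 ≤ g i) (hc : c ≤ 1) (hz : c * g z ≤ h z)
    (hgh : ∀ i ∈ S, i ≠ z → g i = h i) :
    c * ∏ i ∈ S, g i ≤ ∏ i ∈ S, h i := by
  by_cases hzS : z ∈ S
  · have hrest : ∏ i ∈ S.erase z, g i = ∏ i ∈ S.erase z, h i :=
      prod_congr rfl fun i hi => hgh i (mem_of_mem_erase hi) (ne_of_mem_erase hi)
    have hrest_nonneg : 0 ≤ ∏ i ∈ S.erase z, g i :=
      prod_nonneg fun i hi => hg i (mem_of_mem_erase hi)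
    rw [← mul_prod_erase S g hzS, ← mul_prod_erase S h hzS, ← hrest, ← mul_assoc]
    exact mul_le_mul_of_nonneg_right hz hrest_nonneg
  · rw [← prod_congr rfl fun i hi => hgh i hi (ne_of_mem_of_not_mem hi hzS)]
    exact mul_le_of_le_one_left (prod_nonneg hg) hc

theorem sq_mul_div_sum_le_div_sum {ι : Type*} {s : Finset ι} {w w' f : ι → ℝ} {c : ℝ}
    (hc : 0 ≤ c) (hw : ∀ i ∈ s, 0 ≤ w i) (hf : ∀ i ∈ s, 0 ≤ f i)
    (hww' : ∀ i ∈ s, c * w i ≤ w' i) (hw'w : ∀ i ∈ s, c * w' i ≤ w i)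
    (hW : 0 < ∑ i ∈ s, w i) (hW' : 0 < ∑ i ∈ s, w' i) :
    c ^ 2 * ((∑ i ∈ s, w i * f i) / ∑ i ∈ s, w i) ≤
      (∑ i ∈ s, w' i * f i) / ∑ i ∈ s, w' i := by
  have hnum : c * ∑ i ∈ s, w i * f i ≤ ∑ i ∈ s, w' i * f i := by
    rw [mul_sum]
    exact sum_le_sum fun i hi => by
      rw [← mul_assoc]
      exact mul_le_mul_of_nonneg_right (hww' i hi) (hf i hi)
  have hden : c * ∑ i ∈ s, w' i ≤ ∑ i ∈ s, w i := by
    rw [mul_sum]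
    exact sum_le_sum hw'w
  have hnum' : 0 ≤ ∑ i ∈ s, w' i * f i :=
    sum_nonneg fun i hi => mul_nonneg ((mul_nonneg hc (hw i hi)).trans (hww' i hi)) (hf i hi)
  rw [← mul_div_assoc, div_le_div_iff₀ hW hW']
  calc c ^ 2 * (∑ i ∈ s, w i * f i) * ∑ i ∈ s, w' i
      = (c * ∑ i ∈ s, w i * f i) * (c * ∑ i ∈ s, w' i) := by ring
    _ ≤ (∑ i ∈ s, w' i * f i) * ∑ i ∈ s, w i :=
      mul_le_mul hnum hden (mul_nonneg hc hW'.le) hnum'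

theorem mul_rpow_le_rpow_of_le_one {τ η a b : ℝ} (hτ : 0 ≤ τ) (hη : 0 ≤ η) (ha : 0 ≤ a)
    (ha1 : a ≤ 1) (hb : τ ≤ b) : τ ^ η * a ^ η ≤ b ^ η := by
  rw [← Real.mul_rpow hτ ha]
  exact Real.rpow_le_rpow (mul_nonneg hτ ha) ((mul_le_of_le_one_right hτ ha1).trans hb) hη

theorem le_div_and_div_le_inv_of_mul_le {c p p' : ℝ} (hc : 0 < c) (hp : 0 < p)
    (h : c * p ≤ p') (h' : c * p' ≤ p) : c ≤ p' / p ∧ p' / p ≤ c⁻¹ :=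
  ⟨(le_div_iff₀ hp).2 h, (div_le_iff₀ hp).2 ((le_inv_mul_iff₀ hc).2 h')⟩

theorem abs_log_div_le_neg_log {c p p' : ℝ} (hc : 0 < c) (hp : 0 < p)
    (h : c * p ≤ p') (h' : c * p' ≤ p) : |Real.log (p' / p)| ≤ -Real.log c := by
  obtain ⟨hlo, hhi⟩ := le_div_and_div_le_inv_of_mul_le hc hp h h'
  have hlog_lo := Real.log_le_log hc hlo
  have hlog_hi := Real.log_le_log (hc.trans_le hlo) hhi
  rw [Real.log_inv] at hlog_hi
  exact abs_le.2 ⟨by linarith, hlog_hi⟩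

end Inequalities

section KL

variable {X : Type*} [Fintype X]

theorem klDiv_sub_klDiv {P M M' : X → ℝ} (hM : ∀ x, 0 < M x) (hM' : ∀ x, 0 < M' x) :
    klDiv P M' - klDiv P M = ∑ x, P x * Real.log (M x / M' x) := by
  rw [klDiv, klDiv, ← sum_sub_distrib]
  refine sum_congr rfl fun x _ => ?_
  by_cases hP : P x = 0
  · simp [hP]
  · rw [Real.log_div hP (hM' x).ne', Real.log_div hP (hM x).ne',
      Real.log_div (hM x).ne' (hM' x).ne']
    ring

theorem abs_klDiv_sub_klDiv_le_neg_log {P M M' : X → ℝ} {c : ℝ} (hc : 0 < c)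
    (hP : ∀ x, 0 ≤ P x) (hPsum : ∑ x, P x = 1) (hM : ∀ x, 0 < M x)
    (h : ∀ x, c * M x ≤ M' x) (h' : ∀ x, c * M' x ≤ M x) :
    |klDiv P M' - klDiv P M| ≤ -Real.log c := by
  have hM' : ∀ x, 0 < M' x := fun x => (mul_pos hc (hM x)).trans_le (h x)
  rw [klDiv_sub_klDiv hM hM']
  calc |∑ x, P x * Real.log (M x / M' x)|
      ≤ ∑ x, |P x * Real.log (M x / M' x)| := abs_sum_le_sum_abs _ _
    _ ≤ ∑ x, P x * -Real.log c := sum_le_sum fun x _ => by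
        rw [abs_mul, abs_of_nonneg (hP x)]
        exact mul_le_mul_of_nonneg_left (abs_log_div_le_neg_log hc (hM' x) (h' x) (h x)) (hP x)
    _ = -Real.log c := by rw [← sum_mul, hPsum, one_mul]

end KL

section EWA

variable {X : Type*} {T : ℕ}

noncomputable def ewaWeight (η : ℝ) (xs : Fin T → X) (t : Fin T) (Q : X → ℝ) : ℝ :=
  ∏ s ∈ univ.filter (fun s : Fin T => s < t), Q (xs s) ^ η

theorem ewaWeight_pos {η : ℝ} {Q : X → ℝ} (hQ : ∀ x, 0 < Q x) (xs : Fin T → X) (t : Fin T) :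
    0 < ewaWeight η xs t Q :=
  prod_pos fun _ _ => Real.rpow_pos_of_pos (hQ _) η

theorem rpow_mul_ewaWeight_le {τ η : ℝ} (hτ : 0 ≤ τ) (hτ1 : τ ≤ 1) (hη : 0 ≤ η) {Q : X → ℝ}
    (hlo : ∀ x, τ ≤ Q x) (hhi : ∀ x, Q x ≤ 1) {z : Fin T} {xs xs' : Fin T → X}
    (hdiff : ∀ s, s ≠ z → xs s = xs' s) (t : Fin T) :
    τ ^ η * ewaWeight η xs t Q ≤ ewaWeight η xs' t Q :=
  mul_prod_le_prod_of_eq_of_ne z (fun _ _ => Real.rpow_nonneg (hτ.trans (hlo _)) η)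
    (Real.rpow_le_one hτ hτ1 hη)
    (mul_rpow_le_rpow_of_le_one hτ hη (hτ.trans (hlo _)) (hhi _) (hlo _))
    (fun s _ hs => by rw [hdiff s hs])

variable [Fintype X] {C : Finset (X → ℝ)} {η : ℝ}

theorem ewaPred_eq (xs : Fin T → X) (t : Fin T) (y : X) :
    ewaPred C η xs t y =
      (∑ Q ∈ C, ewaWeight η xs t Q * Q y) / ∑ Q ∈ C, ewaWeight η xs t Q :=
  rfl

theorem ewaPred_pos (hC : C.Nonempty) (hQ : ∀ Q ∈ C, ∀ x, 0 < Q x) (xs : Fin T → X)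
    (t : Fin T) (y : X) : 0 < ewaPred C η xs t y := by
  rw [ewaPred_eq]
  exact div_pos (sum_pos (fun Q hQC => mul_pos (ewaWeight_pos (hQ Q hQC) xs t) (hQ Q hQC y)) hC)
    (sum_pos (fun Q hQC => ewaWeight_pos (hQ Q hQC) xs t) hC)

theorem rpow_two_mul_ewaPred_le {τ : ℝ} (hτ : 0 < τ) (hτ1 : τ ≤ 1) (hη : 0 ≤ η)
    (hC : C.Nonempty) (hlo : ∀ Q ∈ C, ∀ x, τ ≤ Q x) (hhi : ∀ Q ∈ C, ∀ x, Q x ≤ 1)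
    {z : Fin T} {xs xs' : Fin T → X} (hdiff : ∀ s, s ≠ z → xs s = xs' s) (t : Fin T) (y : X) :
    τ ^ (2 * η) * ewaPred C η xs t y ≤ ewaPred C η xs' t y := by
  have hQ : ∀ Q ∈ C, ∀ x, 0 < Q x := fun Q hQC x => hτ.trans_le (hlo Q hQC x)
  have hW : ∀ ys : Fin T → X, 0 < ∑ Q ∈ C, ewaWeight η ys t Q := fun ys =>
    sum_pos (fun Q hQC => ewaWeight_pos (hQ Q hQC) ys t) hC
  rw [mul_comm 2 η, Real.rpow_mul hτ.le, Real.rpow_two, ewaPred_eq, ewaPred_eq]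
  exact sq_mul_div_sum_le_div_sum (Real.rpow_nonneg hτ.le η)
    (fun Q hQC => (ewaWeight_pos (hQ Q hQC) xs t).le) (fun Q hQC => (hQ Q hQC y).le)
    (fun Q hQC => rpow_mul_ewaWeight_le hτ.le hτ1 hη (hlo Q hQC) (hhi Q hQC) hdiff t)
    (fun Q hQC => rpow_mul_ewaWeight_le hτ.le hτ1 hη (hlo Q hQC) (hhi Q hQC)
      (fun s hs => (hdiff s hs).symm) t)
    (hW xs) (hW xs')

noncomputable def ewaMean (C : Finset (X → ℝ)) (η : ℝ) (xs : Fin T → X) : X → ℝ :=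
  fun y => (1 / (T : ℝ)) * ∑ t, ewaPred C η xs t y

theorem ewaMean_pos (hT : 0 < T) {xs : Fin T → X} (hpos : ∀ t y, 0 < ewaPred C η xs t y)
    (y : X) : 0 < ewaMean C η xs y :=
  mul_pos (by positivity) (sum_pos (fun t _ => hpos t y) (univ_nonempty_iff.2 ⟨⟨0, hT⟩⟩))

theorem mul_ewaMean_le {c : ℝ} {xs xs' : Fin T → X}
    (h : ∀ t y, c * ewaPred C η xs t y ≤ ewaPred C η xs' t y) (y : X) :
    c * ewaMean C η xs y ≤ ewaMean C η xs' y := by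
  rw [ewaMean, ewaMean, mul_left_comm, mul_sum]
  exact mul_le_mul_of_nonneg_left (sum_le_sum fun t _ => h t y) (by positivity)

end EWA

/-- bounded-differences stability of EWA.  If all experts have all
probabilities at least `τ` and the two sample sequences differ only in the
first sample, then each predicted mixture changes by at most a `τ^{±2η}`
multiplicative factor pointwise, and consequently the KL divergence from `P*`
to the time-averaged mixture changes by at most `2η·log(1/τ)`. -/
theorem ewa_bounded_differences {X : Type*} [Fintype X]
    (T : ℕ) (hT : 0 < T) (τ η : ℝ) (hτ : 0 < τ) (hτ1 : τ ≤ 1) (hη : 0 < η)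
    (C : Finset (X → ℝ)) (hC : C.Nonempty)
    (hCτ : ∀ P ∈ C, ∀ x, τ ≤ P x) (hCsum : ∀ P ∈ C, ∑ x, P x = 1)
    (Pstar : X → ℝ) (hPnonneg : ∀ x, 0 ≤ Pstar x) (hPsum : ∑ x, Pstar x = 1)
    (xs xs' : Fin T → X) (hdiff : ∀ t : Fin T, t ≠ ⟨0, hT⟩ → xs t = xs' t) :
    (∀ (t : Fin T) (y : X),
        τ ^ (2 * η) ≤ ewaPred C η xs' t y / ewaPred C η xs t y ∧
        ewaPred C η xs' t y / ewaPred C η xs t y ≤ τ ^ (-(2 * η))) ∧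
    |klDiv Pstar (fun y => (1 / (T : ℝ)) * ∑ t, ewaPred C η xs' t y) -
        klDiv Pstar (fun y => (1 / (T : ℝ)) * ∑ t, ewaPred C η xs t y)| ≤
      2 * η * Real.log (1 / τ) := by
  have hCle : ∀ P ∈ C, ∀ x, P x ≤ 1 := fun P hP x =>
    (single_le_sum (fun x' _ => hτ.le.trans (hCτ P hP x')) (mem_univ x)).trans_eq (hCsum P hP)
  have hpos : ∀ (ys : Fin T → X) t y, 0 < ewaPred C η ys t y :=
    ewaPred_pos hC fun P hP x => hτ.trans_le (hCτ P hP x)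
  have hc : 0 < τ ^ (2 * η) := Real.rpow_pos_of_pos hτ _
  have hfwd := rpow_two_mul_ewaPred_le hτ hτ1 hη.le hC hCτ hCle hdiff
  have hbwd := rpow_two_mul_ewaPred_le hτ hτ1 hη.le hC hCτ hCle fun s hs => (hdiff s hs).symm
  refine ⟨fun t y => ?_, ?_⟩
  · rw [Real.rpow_neg hτ.le]
    exact le_div_and_div_le_inv_of_mul_le hc (hpos xs t y) (hfwd t y) (hbwd t y)
  · have hlog : -Real.log (τ ^ (2 * η)) = 2 * η * Real.log (1 / τ) := by
      rw [Real.log_rpow hτ, one_div, Real.log_inv]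
      ring
    rw [← hlog]
    exact abs_klDiv_sub_klDiv_le_neg_log hc hPnonneg hPsum (ewaMean_pos hT (hpos xs))
      (mul_ewaMean_le hfwd) (mul_ewaMean_le hbwd)
end
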